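/- arXiv:1605.05744 — 3 statements merged into one kernel-verified Lean document; each statement's English description precedes it below -/
import Mathlib

section
/- Let n ≥ 2 and u ∈ ℂ. If λ is a partition of n having at least one even part (i.e., λ ∉ 𝒪𝒫_n) and w ∈ S_n has cycle type λ, then w ∈ [ℌ_A, ℌ_A]. -/
open scoped BigOperators

namespace DAHCA

/-- Generators of the degenerate affine Hecke-Clifford algebra of type `A_{n-1}`. -/
inductive Gen (n : ℕ) : Type
  | x : Fin n → Gen n
  | c : Fin n → Gen n
  | w : Equiv.Perm (Fin n) → Gen n

noncomputable def X (n : ℕ) (i : Fin n) : FreeAlgebra ℂ (Gen n) := FreeAlgebra.ι ℂ (Gen.x i)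
noncomputable def C (n : ℕ) (i : Fin n) : FreeAlgebra ℂ (Gen n) := FreeAlgebra.ι ℂ (Gen.c i)
noncomputable def W (n : ℕ) (σ : Equiv.Perm (Fin n)) : FreeAlgebra ℂ (Gen n) :=
  FreeAlgebra.ι ℂ (Gen.w σ)

/-- The simple transposition `s_{i+1} = (i, i+1)` (0-indexed). -/
def sA (n : ℕ) (i : ℕ) (h : i + 1 < n) : Equiv.Perm (Fin n) :=
  Equiv.swap ⟨i, Nat.lt_of_succ_lt h⟩ ⟨i + 1, h⟩

/-- The defining relations of the degenerate affine Hecke-Clifford algebra of type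
`A_{n-1}` with parameter `u`. -/
inductive Rel (n : ℕ) (u : ℂ) : FreeAlgebra ℂ (Gen n) → FreeAlgebra ℂ (Gen n) → Prop
  | xx (i j : Fin n) : Rel n u (X n i * X n j) (X n j * X n i)
  | csq (i : Fin n) : Rel n u (C n i * C n i) 1
  | cc (i j : Fin n) (hij : i ≠ j) : Rel n u (C n i * C n j) (-(C n j * C n i))
  | ww (σ τ : Equiv.Perm (Fin n)) : Rel n u (W n σ * W n τ) (W n (σ * τ))
  | wone : Rel n u (W n 1) 1
  | xc (i : Fin n) : Rel n u (X n i * C n i) (-(C n i * X n i))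
  | xc' (i j : Fin n) (hij : i ≠ j) : Rel n u (X n i * C n j) (C n j * X n i)
  | wc (σ : Equiv.Perm (Fin n)) (i : Fin n) : Rel n u (W n σ * C n i) (C n (σ i) * W n σ)
  | cross (i : ℕ) (h : i + 1 < n) :
      Rel n u (X n ⟨i + 1, h⟩ * W n (sA n i h) - W n (sA n i h) * X n ⟨i, Nat.lt_of_succ_lt h⟩)
        (u • (1 - C n ⟨i + 1, h⟩ * C n ⟨i, Nat.lt_of_succ_lt h⟩))
  | xw (i : ℕ) (h : i + 1 < n) (j : Fin n) (h1 : (j : ℕ) ≠ i) (h2 : (j : ℕ) ≠ i + 1) :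
      Rel n u (X n j * W n (sA n i h)) (W n (sA n i h) * X n j)

/-- The degenerate affine Hecke-Clifford algebra of type `A_{n-1}` with parameter `u`. -/
abbrev HA (n : ℕ) (u : ℂ) := RingQuot (Rel n u)

noncomputable def xH (n : ℕ) (u : ℂ) (i : Fin n) : HA n u :=
  RingQuot.mkAlgHom ℂ (Rel n u) (X n i)
noncomputable def cH (n : ℕ) (u : ℂ) (i : Fin n) : HA n u :=
  RingQuot.mkAlgHom ℂ (Rel n u) (C n i)
noncomputable def wH (n : ℕ) (u : ℂ) (σ : Equiv.Perm (Fin n)) : HA n u :=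
  RingQuot.mkAlgHom ℂ (Rel n u) (W n σ)

/-- The linear span of all commutators in an algebra `A`; the cocenter is `A` modulo
this subspace. -/
def commSpan (A : Type*) [Ring A] [Algebra ℂ A] : Submodule ℂ A :=
  Submodule.span ℂ {z : A | ∃ a b : A, z = a * b - b * a}

/-- The ordered product `c_{i_1} c_{i_2} ⋯ c_{i_m}` over `I = {i_1 < i_2 < ⋯ < i_m}`. -/
noncomputable def cProd (n : ℕ) (u : ℂ) (I : Finset (Fin n)) : HA n u :=
  ((I.sort (· ≤ ·)).map (cH n u)).prod

/-- The cycle `(a, a+1, …, b-1)` expressed as the product of the simple transpositions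
`s_{a+1} s_{a+2} ⋯ s_{b-1}` (1-indexed), i.e. `(a,a+1)(a+1,a+2)⋯(b-2,b-1)` (0-indexed). -/
def wSeg (n : ℕ) (a b : ℕ) : Equiv.Perm (Fin n) :=
  ((List.range (b - a - 1)).map fun j =>
    if h : a + j + 1 < n then sA n (a + j) h else 1).prod

end DAHCA
namespace DAHCA

/-- `w` has cycle type `λ`: the nontrivial parts of `λ` are exactly the cycle lengths of
`w` (the parts equal to `1` correspond to the fixed points of `w`). -/
def HasCycleType (n : ℕ) (w : Equiv.Perm (Fin n)) (lam : Nat.Partition n) : Prop :=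
  Multiset.filter (fun p => p ≠ 1) lam.parts = Equiv.Perm.cycleType w

end DAHCA

/-!
If `w` has a cycle `(x, w x, …, w^{p-1} x)` of even length `p`, put
`P = c_x c_{w x} ⋯ c_{w^{p-1} x}`. Conjugating by `w` rotates the factors of `P` by one place,
and moving `c_x` back to the front past `p - 1` anticommuting `c`'s costs the sign
`(-1)^{p-1} = -1`; so `w P = -P w`. Since `P` is invertible (each `c_i` squares to `1`),
`[P⁻¹, w P] = -2 w`, and `w` is a multiple of a commutator.
-/

namespace Equiv.Perm

variable {α : Type*} [Fintype α] [DecidableEq α]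

theorem map_toList (p : Perm α) (x : α) : (p.toList x).map p = (p.toList x).rotate 1 := by
  rw [← toList_pow_apply_eq_rotate, pow_one]
  refine List.ext_getElem (by simp [length_toList, cycleOf_self_apply]) fun k _ _ => ?_
  rw [List.getElem_map, getElem_toList, getElem_toList, ← mul_apply, ← pow_succ', pow_succ,
    mul_apply]

theorem exists_length_toList_eq_of_mem_cycleType {σ : Perm α} {k : ℕ}
    (hk : k ∈ σ.cycleType) : ∃ x, (σ.toList x).length = k := by
  obtain ⟨c, hc, rfl⟩ := Multiset.mem_map.1 (σ.cycleType_def ▸ hk)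
  obtain ⟨x, hx⟩ := (mem_cycleFactorsFinset_iff.1 hc).1.nonempty_support
  exact ⟨x, by rw [length_toList, ← cycle_is_cycleOf hx hc]; rfl⟩

end Equiv.Perm

namespace DAHCA

theorem mem_commSpan_of_mul_eq_neg_mul {A : Type*} [Ring A] [Algebra ℂ A] {w P : A}
    (hP : IsUnit P) (h : w * P = -(P * w)) : w ∈ commSpan A := by
  obtain ⟨P, rfl⟩ := hP
  have hcomm : (↑P⁻¹ * (w * P) - w * P * ↑P⁻¹ : A) = (-2 : ℂ) • w := by
    rw [mul_assoc w, Units.mul_inv, mul_one, h, mul_neg, ← mul_assoc, Units.inv_mul, one_mul]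
    module
  have hmem := (commSpan A).smul_mem (-2 : ℂ)⁻¹
    (Submodule.subset_span ⟨(↑P⁻¹ : A), w * P, rfl⟩)
  rwa [hcomm, smul_smul, inv_mul_cancel₀ (by norm_num), one_smul] at hmem

section Relations

variable {n : ℕ} {u : ℂ}

theorem cH_mul_self (i : Fin n) : cH n u i * cH n u i = 1 := by
  simpa [cH] using RingQuot.mkAlgHom_rel ℂ (Rel.csq (u := u) i)

theorem cH_mul_cH_of_ne {i j : Fin n} (hij : i ≠ j) :
    cH n u i * cH n u j = -(cH n u j * cH n u i) := by
  simpa [cH] using RingQuot.mkAlgHom_rel ℂ (Rel.cc (u := u) i j hij)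

theorem wH_mul_cH (σ : Equiv.Perm (Fin n)) (i : Fin n) :
    wH n u σ * cH n u i = cH n u (σ i) * wH n u σ := by
  simpa [wH, cH] using RingQuot.mkAlgHom_rel ℂ (Rel.wc (u := u) σ i)

theorem isUnit_prod_cH (L : List (Fin n)) : IsUnit (L.map (cH n u)).prod :=
  List.prod_isUnit <| by
    simpa using fun i _ => isUnit_iff_exists.2 ⟨_, cH_mul_self (u := u) i, cH_mul_self i⟩

theorem wH_mul_prod_cH (σ : Equiv.Perm (Fin n)) (L : List (Fin n)) :
    wH n u σ * (L.map (cH n u)).prod = ((L.map σ).map (cH n u)).prod * wH n u σ := by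
  induction L with
  | nil => simp
  | cons a L ih =>
    simp only [List.map_cons, List.prod_cons]
    rw [← mul_assoc, wH_mul_cH, mul_assoc, ih, ← mul_assoc]

theorem prod_cH_mul_cH {a : Fin n} {M : List (Fin n)} (ha : a ∉ M) :
    (M.map (cH n u)).prod * cH n u a
      = (-1 : ℂ) ^ M.length • (cH n u a * (M.map (cH n u)).prod) := by
  induction M with
  | nil => simp
  | cons b M ih =>
    have hba : b ≠ a := fun h => ha (h ▸ List.mem_cons_self)
    -- `rw [neg_one_smul]` fails on `HA n u`: its `ℂ`-action is `RingQuot`'s own `SMul`, which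
    -- agrees with the module action only up to unfolding; term proofs see through it.
    have hswap : cH n u b * cH n u a = (-1 : ℂ) • (cH n u a * cH n u b) :=
      (cH_mul_cH_of_ne hba).trans (neg_one_smul ℂ _).symm
    simp only [List.map_cons, List.prod_cons, List.length_cons]
    rw [mul_assoc, ih (fun h => ha (List.mem_cons_of_mem b h)), mul_smul_comm, ← mul_assoc,
      hswap, smul_mul_assoc, smul_smul, ← pow_succ, mul_assoc]

theorem wH_mul_prod_cH_toList (w : Equiv.Perm (Fin n)) {x : Fin n} (hx : x ∈ w.support)
    (heven : Even (w.toList x).length) :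
    wH n u w * ((w.toList x).map (cH n u)).prod
      = -(((w.toList x).map (cH n u)).prod * wH n u w) := by
  have hnodup := w.nodup_toList x
  rw [wH_mul_prod_cH, w.map_toList]
  obtain ⟨a, M, hL⟩ :=
    List.exists_cons_of_ne_nil fun h => Equiv.Perm.toList_eq_nil_iff.1 h hx
  rw [hL] at hnodup heven ⊢
  have hodd : Odd M.length := by simpa [Nat.even_add_one] using heven
  rw [List.rotate_cons_succ, List.rotate_zero, List.map_append, List.prod_append]
  simp only [List.map_cons, List.map_nil, List.prod_cons, List.prod_nil, mul_one]
  rw [prod_cH_mul_cH (List.nodup_cons.1 hnodup).1, hodd.neg_one_pow, smul_mul_assoc, mul_assoc]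
  exact neg_one_smul ℂ (M := HA n u) _

end Relations

theorem perm_not_odd_partition_mem_commutator_general (n : ℕ) (u : ℂ)
    (lam : Nat.Partition n) (hlam : ∃ p ∈ lam.parts, Even p)
    (w : Equiv.Perm (Fin n)) (hw : HasCycleType n w lam) :
    wH n u w ∈ commSpan (HA n u) := by
  obtain ⟨p, hp, hpe⟩ := hlam
  have hp1 : p ≠ 1 := by rintro rfl; exact Nat.not_even_one hpe
  have hpc : p ∈ w.cycleType := hw ▸ Multiset.mem_filter.2 ⟨hp, hp1⟩
  obtain ⟨x, hx⟩ := w.exists_length_toList_eq_of_mem_cycleType hpc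
  have hxw : x ∈ w.support := Equiv.Perm.two_le_length_toList_iff_mem_support.1
    (hx ▸ Equiv.Perm.two_le_of_mem_cycleType hpc)
  exact mem_commSpan_of_mul_eq_neg_mul (isUnit_prod_cH _)
    (wH_mul_prod_cH_toList w hxw (hx ▸ hpe))

/-- If `λ` is a partition of `n` having at least one even part and
`w ∈ S_n` has cycle type `λ`, then `w` lies in the span of commutators of `ℌ_A`. -/
theorem perm_not_odd_partition_mem_commutator (n : ℕ) (hn : 2 ≤ n) (u : ℂ)
    (lam : Nat.Partition n) (hlam : ∃ p ∈ lam.parts, Even p)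
    (w : Equiv.Perm (Fin n)) (hw : HasCycleType n w lam) :
    wH n u w ∈ commSpan (HA n u) :=
  perm_not_odd_partition_mem_commutator_general n u lam hlam w hw

end DAHCA
end

section
/- Let n ≥ 2 and u, v ∈ ℂ. Let (λ,μ) be a bipartition of n such that λ has an even part or μ has an odd part (i.e., it is not the case that all parts of λ are odd and all parts of μ are even). Then every w ∈ W_{B_n} whose cycle type is (λ,μ) satisfies w ∈ [ℌ_B, ℌ_B]. -/
open scoped BigOperators

namespace DAHCBD

/-- The set `{±1, …, ±n}` on which signed permutations act: `(i, true)` is `i` and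
`(i, false)` is `−i`. -/
abbrev P (n : ℕ) := Fin n × Bool

/-- The sign-flip involution `i ↦ −i`. -/
def negP (n : ℕ) : Equiv.Perm (P n) :=
  ⟨fun p => (p.1, !p.2), fun p => (p.1, !p.2), fun p => by simp, fun p => by simp⟩

lemma negP_apply (n : ℕ) (p : P n) : negP n p = (p.1, !p.2) := rfl

/-- A permutation of `{±1, …, ±n}` is a signed permutation when it commutes with the
sign-flip, i.e. `π(−i) = −π(i)`. -/
def IsSigned (n : ℕ) (π : Equiv.Perm (P n)) : Prop :=
  ∀ p : P n, π (negP n p) = negP n (π p)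

/-- The signed simple reflection `s_i = (i, i+1)(−i, −(i+1))` (0-indexed `i`). -/
def sgnSwap (n : ℕ) (i : ℕ) (h : i + 1 < n) : Equiv.Perm (P n) :=
  Equiv.swap (⟨i, Nat.lt_of_succ_lt h⟩, true) (⟨i + 1, h⟩, true) *
    Equiv.swap (⟨i, Nat.lt_of_succ_lt h⟩, false) (⟨i + 1, h⟩, false)

/-- The type-`B` simple reflection `s_n = (n, −n)`. -/
def sBn (n : ℕ) (h : 0 < n) : Equiv.Perm (P n) :=
  Equiv.swap (⟨n - 1, Nat.sub_lt h Nat.one_pos⟩, true) (⟨n - 1, Nat.sub_lt h Nat.one_pos⟩, false)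

/-- The type-`D` simple reflection `s_n = (n−1, −n)(n, −(n−1))`. -/
def sDn (n : ℕ) (h : 2 ≤ n) : Equiv.Perm (P n) :=
  Equiv.swap (⟨n - 2, by omega⟩, true) (⟨n - 1, by omega⟩, false) *
    Equiv.swap (⟨n - 1, by omega⟩, true) (⟨n - 2, by omega⟩, false)

/-- The simple reflections of type `A_{n-1}` inside the signed permutations. -/
def simplesTypeA (n : ℕ) : Set (Equiv.Perm (P n)) :=
  {σ | ∃ (i : ℕ) (h : i + 1 < n), σ = sgnSwap n i h}

/-- The simple reflections of `W_{B_n}`. -/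
def simplesB (n : ℕ) : Set (Equiv.Perm (P n)) :=
  simplesTypeA n ∪ {σ | ∃ h : 0 < n, σ = sBn n h}

/-- The simple reflections of `W_{D_n}`. -/
def simplesD (n : ℕ) : Set (Equiv.Perm (P n)) :=
  simplesTypeA n ∪ {σ | ∃ h : 2 ≤ n, σ = sDn n h}

/-- The Weyl group of type `B_n`, generated by its simple reflections. -/
def WB (n : ℕ) : Subgroup (Equiv.Perm (P n)) := Subgroup.closure (simplesB n)

/-- The Weyl group of type `D_n`, generated by its simple reflections. -/
def WD (n : ℕ) : Subgroup (Equiv.Perm (P n)) := Subgroup.closure (simplesD n)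

lemma sgnSwap_mem_WB (n : ℕ) (i : ℕ) (h : i + 1 < n) : sgnSwap n i h ∈ WB n :=
  Subgroup.subset_closure (Or.inl ⟨i, h, rfl⟩)

lemma sBn_mem_WB (n : ℕ) (h : 0 < n) : sBn n h ∈ WB n :=
  Subgroup.subset_closure (Or.inr ⟨h, rfl⟩)

lemma sgnSwap_mem_WD (n : ℕ) (i : ℕ) (h : i + 1 < n) : sgnSwap n i h ∈ WD n :=
  Subgroup.subset_closure (Or.inl ⟨i, h, rfl⟩)

lemma sDn_mem_WD (n : ℕ) (h : 2 ≤ n) : sDn n h ∈ WD n :=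
  Subgroup.subset_closure (Or.inr ⟨h, rfl⟩)

/-- The simple reflection `s_{i+1}` as an element of `W_{B_n}` (`1` if out of range). -/
def sB' (n : ℕ) (i : ℕ) : ↥(WB n) :=
  if h : i + 1 < n then ⟨sgnSwap n i h, sgnSwap_mem_WB n i h⟩ else 1

/-- The last simple reflection `s_n` as an element of `W_{B_n}` (`1` if `n = 0`). -/
def sBlast' (n : ℕ) : ↥(WB n) :=
  if h : 0 < n then ⟨sBn n h, sBn_mem_WB n h⟩ else 1

/-- The simple reflection `s_{i+1}` as an element of `W_{D_n}` (`1` if out of range). -/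
def sD' (n : ℕ) (i : ℕ) : ↥(WD n) :=
  if h : i + 1 < n then ⟨sgnSwap n i h, sgnSwap_mem_WD n i h⟩ else 1

/-- The last simple reflection `s_n` as an element of `W_{D_n}` (`1` if `n < 2`). -/
def sDlast' (n : ℕ) : ↥(WD n) :=
  if h : 2 ≤ n then ⟨sDn n h, sDn_mem_WD n h⟩ else 1

open Fin.NatCast in
/-- The cycle `(a, a+1, …, a+m-1)` on `Fin n`. -/
def blockCycleF (n a m : ℕ) : Equiv.Perm (Fin n) :=
  if h : 0 < n then
    haveI : NeZero n := ⟨h.ne'⟩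
    (Equiv.addLeft (a : Fin n)) * (Fin.cycleRange ((m - 1 : ℕ) : Fin n)) *
      (Equiv.addLeft (a : Fin n))⁻¹
  else 1

/-- The positive `m`-cycle `(a, a+1, …, a+m-1)` as a signed permutation. -/
def posCycle (n a m : ℕ) : Equiv.Perm (P n) :=
  Equiv.prodCongr (blockCycleF n a m) (Equiv.refl Bool)

open Fin.NatCast in
/-- The sign flip at position `j`. -/
def flipAt (n : ℕ) (j : ℕ) : Equiv.Perm (P n) :=
  if h : 0 < n then
    haveI : NeZero n := ⟨h.ne'⟩
    Equiv.swap ((j : Fin n), true) ((j : Fin n), false)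
  else 1

/-- The negative `m`-cycle `(a → a+1 → ⋯ → a+m-1 → −a)` as a signed permutation. -/
def negCycle (n a m : ℕ) : Equiv.Perm (P n) :=
  posCycle n a m * flipAt n (a + m - 1)

/-- Sort a multiset of naturals in decreasing order. -/
def sortDescM (m : Multiset ℕ) : List ℕ := (m.sort (· ≤ ·)).reverse

/-- The standard representative of the conjugacy class of cycle type `(λ, μ)`:
positive cycles on consecutive blocks of sizes `λ_1 ≥ λ_2 ≥ ⋯`, followed by negative
cycles on consecutive blocks of sizes `μ_1 ≥ μ_2 ≥ ⋯`. -/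
def stdRep (n : ℕ) (ll lm : List ℕ) : Equiv.Perm (P n) :=
  ((List.range ll.length).map fun k => posCycle n ((ll.take k).sum) (ll.getD k 0)).prod *
    ((List.range lm.length).map fun k =>
      negCycle n (ll.sum + (lm.take k).sum) (lm.getD k 0)).prod

/-- A signed permutation `w` has cycle type `(λ, μ)` iff it is conjugate, by a signed
permutation, to the standard representative of type `(λ, μ)`:  `λ` lists the lengths of
the positive cycles of `w` and `μ` the lengths of the negative cycles. -/
def CycType (n : ℕ) (w : Equiv.Perm (P n)) (lam mu : Multiset ℕ) : Prop :=
  ∃ τ : Equiv.Perm (P n), IsSigned n τ ∧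
    w = τ * stdRep n (sortDescM lam) (sortDescM mu) * τ⁻¹

/-- A bipartition of `n`: a pair of partitions `(λ, μ)` with `|λ| + |μ| = n`. -/
structure Bip (n : ℕ) where
  l : Multiset ℕ
  m : Multiset ℕ
  posl : ∀ a ∈ l, 0 < a
  posm : ∀ a ∈ m, 0 < a
  hsum : l.sum + m.sum = n

lemma isSigned_inv {n : ℕ} {π : Equiv.Perm (P n)} (hπ : IsSigned n π) : IsSigned n π⁻¹ := by
  intro p
  have h1 := hπ (π⁻¹ p)
  have h2 : π (negP n (π⁻¹ p)) = negP n p := by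
    rw [h1]
    simp
  calc π⁻¹ (negP n p) = π⁻¹ (π (negP n (π⁻¹ p))) := by rw [h2]
    _ = negP n (π⁻¹ p) := Equiv.Perm.inv_eq_iff_eq.mpr rfl

lemma uPerm_aux {n : ℕ} (π : Equiv.Perm (P n)) (hπ : IsSigned n π) (i : Fin n) :
    (π⁻¹ ((π (i, true)).1, true)).1 = i := by
  by_cases hs : (π (i, true)).2 = true
  · have h1 : ((π (i, true)).1, true) = π (i, true) := Prod.ext rfl hs.symm
    rw [h1]
    simp
  · have hs' : (π (i, true)).2 = false := by simpa using hs
    have h1 : ((π (i, true)).1, true) = negP n (π (i, true)) := by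
      rw [negP_apply, hs']
      rfl
    have h2 : π⁻¹ (negP n (π (i, true))) = negP n (i, true) := by
      rw [← hπ (i, true)]
      exact Equiv.Perm.inv_eq_iff_eq.mpr rfl
    rw [h1, h2]
    rfl

/-- The underlying (unsigned) permutation of a signed permutation. -/
noncomputable def uPerm (n : ℕ) (π : Equiv.Perm (P n)) : Equiv.Perm (Fin n) :=
  haveI := Classical.dec (IsSigned n π)
  if hπ : IsSigned n π then
    { toFun := fun i => (π (i, true)).1
      invFun := fun i => (π⁻¹ (i, true)).1
      left_inv := fun i => uPerm_aux π hπ i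
      right_inv := fun i => by
        have := uPerm_aux π⁻¹ (isSigned_inv hπ) i
        simpa using this }
  else 1

end DAHCBD
namespace DAHCBD

/-- Generators of the degenerate affine Hecke-Clifford algebra of type `B_n`. -/
inductive GenB (n : ℕ) : Type
  | x : Fin n → GenB n
  | c : Fin n → GenB n
  | w : ↥(WB n) → GenB n

noncomputable def XB (n : ℕ) (i : Fin n) : FreeAlgebra ℂ (GenB n) := FreeAlgebra.ι ℂ (GenB.x i)
noncomputable def CB (n : ℕ) (i : Fin n) : FreeAlgebra ℂ (GenB n) := FreeAlgebra.ι ℂ (GenB.c i)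
noncomputable def WBg (n : ℕ) (σ : ↥(WB n)) : FreeAlgebra ℂ (GenB n) :=
  FreeAlgebra.ι ℂ (GenB.w σ)

/-- The defining relations of the degenerate affine Hecke-Clifford algebra of type `B_n`
with parameters `u, v`. -/
inductive RelB (n : ℕ) (u v : ℂ) : FreeAlgebra ℂ (GenB n) → FreeAlgebra ℂ (GenB n) → Prop
  | xx (i j : Fin n) : RelB n u v (XB n i * XB n j) (XB n j * XB n i)
  | csq (i : Fin n) : RelB n u v (CB n i * CB n i) 1
  | cc (i j : Fin n) (hij : i ≠ j) : RelB n u v (CB n i * CB n j) (-(CB n j * CB n i))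
  | ww (σ τ : ↥(WB n)) : RelB n u v (WBg n σ * WBg n τ) (WBg n (σ * τ))
  | wone : RelB n u v (WBg n 1) 1
  | xc (i : Fin n) : RelB n u v (XB n i * CB n i) (-(CB n i * XB n i))
  | xc' (i j : Fin n) (hij : i ≠ j) : RelB n u v (XB n i * CB n j) (CB n j * XB n i)
  | sc1 (i : ℕ) (h : i + 1 < n) :
      RelB n u v (WBg n ⟨sgnSwap n i h, sgnSwap_mem_WB n i h⟩ * CB n ⟨i, Nat.lt_of_succ_lt h⟩)
        (CB n ⟨i + 1, h⟩ * WBg n ⟨sgnSwap n i h, sgnSwap_mem_WB n i h⟩)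
  | sc2 (i : ℕ) (h : i + 1 < n) :
      RelB n u v (WBg n ⟨sgnSwap n i h, sgnSwap_mem_WB n i h⟩ * CB n ⟨i + 1, h⟩)
        (CB n ⟨i, Nat.lt_of_succ_lt h⟩ * WBg n ⟨sgnSwap n i h, sgnSwap_mem_WB n i h⟩)
  | sc3 (i : ℕ) (h : i + 1 < n) (j : Fin n) (h1 : (j : ℕ) ≠ i) (h2 : (j : ℕ) ≠ i + 1) :
      RelB n u v (WBg n ⟨sgnSwap n i h, sgnSwap_mem_WB n i h⟩ * CB n j)
        (CB n j * WBg n ⟨sgnSwap n i h, sgnSwap_mem_WB n i h⟩)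
  | cross (i : ℕ) (h : i + 1 < n) :
      RelB n u v (XB n ⟨i + 1, h⟩ * WBg n ⟨sgnSwap n i h, sgnSwap_mem_WB n i h⟩ -
          WBg n ⟨sgnSwap n i h, sgnSwap_mem_WB n i h⟩ * XB n ⟨i, Nat.lt_of_succ_lt h⟩)
        (u • (1 - CB n ⟨i + 1, h⟩ * CB n ⟨i, Nat.lt_of_succ_lt h⟩))
  | xw (i : ℕ) (h : i + 1 < n) (j : Fin n) (h1 : (j : ℕ) ≠ i) (h2 : (j : ℕ) ≠ i + 1) :
      RelB n u v (XB n j * WBg n ⟨sgnSwap n i h, sgnSwap_mem_WB n i h⟩)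
        (WBg n ⟨sgnSwap n i h, sgnSwap_mem_WB n i h⟩ * XB n j)
  | snc (h : 0 < n) :
      RelB n u v (WBg n ⟨sBn n h, sBn_mem_WB n h⟩ * CB n ⟨n - 1, Nat.sub_lt h Nat.one_pos⟩)
        (-(CB n ⟨n - 1, Nat.sub_lt h Nat.one_pos⟩ * WBg n ⟨sBn n h, sBn_mem_WB n h⟩))
  | snc' (h : 0 < n) (i : Fin n) (hi : (i : ℕ) ≠ n - 1) :
      RelB n u v (WBg n ⟨sBn n h, sBn_mem_WB n h⟩ * CB n i)
        (CB n i * WBg n ⟨sBn n h, sBn_mem_WB n h⟩)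
  | snx (h : 0 < n) :
      RelB n u v (WBg n ⟨sBn n h, sBn_mem_WB n h⟩ * XB n ⟨n - 1, Nat.sub_lt h Nat.one_pos⟩ +
          XB n ⟨n - 1, Nat.sub_lt h Nat.one_pos⟩ * WBg n ⟨sBn n h, sBn_mem_WB n h⟩)
        ((-((Real.sqrt 2 : ℂ) * v)) • 1)
  | snx' (h : 0 < n) (i : Fin n) (hi : (i : ℕ) ≠ n - 1) :
      RelB n u v (WBg n ⟨sBn n h, sBn_mem_WB n h⟩ * XB n i)
        (XB n i * WBg n ⟨sBn n h, sBn_mem_WB n h⟩)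

/-- The degenerate affine Hecke-Clifford algebra of type `B_n`. -/
abbrev HB (n : ℕ) (u v : ℂ) := RingQuot (RelB n u v)

noncomputable def xB (n : ℕ) (u v : ℂ) (i : Fin n) : HB n u v :=
  RingQuot.mkAlgHom ℂ (RelB n u v) (XB n i)
noncomputable def cB (n : ℕ) (u v : ℂ) (i : Fin n) : HB n u v :=
  RingQuot.mkAlgHom ℂ (RelB n u v) (CB n i)
noncomputable def wB (n : ℕ) (u v : ℂ) (σ : ↥(WB n)) : HB n u v :=
  RingQuot.mkAlgHom ℂ (RelB n u v) (WBg n σ)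

/-- The linear span of all commutators in an algebra `A`. -/
def commSpan (A : Type*) [Ring A] [Algebra ℂ A] : Submodule ℂ A :=
  Submodule.span ℂ {z : A | ∃ a b : A, z = a * b - b * a}

/-- The ordered product `c_{i_1} c_{i_2} ⋯ c_{i_m}` over `I = {i_1 < i_2 < ⋯ < i_m}`. -/
noncomputable def cProdB (n : ℕ) (u v : ℂ) (I : Finset (Fin n)) : HB n u v :=
  ((I.sort (· ≤ ·)).map (cB n u v)).prod

/-- The product `s_{a+1} s_{a+2} ⋯ s_{b-1}` of type-`A` simple reflections in `W_{B_n}`. -/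
def wSegB (n : ℕ) (a b : ℕ) : ↥(WB n) :=
  ((List.range (b - a - 1)).map fun j => sB' n (a + j)).prod

/-- The signed permutation `w_{(n)} = s_1 s_2 ⋯ s_{n-1} s_n ∈ W_{B_n}`. -/
def wCircB (n : ℕ) : ↥(WB n) := wSegB n 0 n * sBlast' n

end DAHCBD

/-!
Let `w` have a positive cycle of even length or a negative cycle of odd length, on the letters
`i_1, …, i_m` in cyclic order, and put `c = c_{i_1} ⋯ c_{i_m}`. Conjugation by `w` turns `c` into
the product of the signs along the cycle times the rotated monomial `c_{i_2} ⋯ c_{i_m} c_{i_1}`,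
and rotating back costs `(-1)^(m-1)`; the parity assumption makes the total sign `-1`, so
`w c = -c w`. Since `c² = s` is a nonzero scalar, `w = ((w c) c - c (w c)) / (2 s)` is a sum of
commutators. Such a cycle is read off the standard representative of the conjugacy class of `w`
and transported to `w` by the conjugating signed permutation.
-/

namespace DAHCBD

noncomputable section

lemma mem_commSpan_of_mul_eq_neg {A : Type*} [Ring A] [Algebra ℂ A] {a c : A} {s : ℂ}
    (hs : s ≠ 0) (hac : a * c = -(c * a)) (hcc : c * c = s • 1) : a ∈ commSpan A := by
  have hcomm : (a * c) * c - c * (a * c) = (2 * s) • a := by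
    rw [mul_assoc, hcc, ← mul_assoc, ← neg_neg (c * a), ← hac, neg_mul, mul_assoc, hcc,
      sub_neg_eq_add, mul_smul_comm, mul_one, ← two_smul ℂ, smul_smul]
  have hmem : (a * c) * c - c * (a * c) ∈ commSpan A := Submodule.subset_span ⟨a * c, c, rfl⟩
  rw [hcomm] at hmem
  have h := Submodule.smul_mem _ (2 * s)⁻¹ hmem
  rwa [smul_smul, inv_mul_cancel₀ (mul_ne_zero two_ne_zero hs), one_smul] at h

section ListProducts

variable {α : Type*}

lemma prod_map_range_apply_of_fix (F : ℕ → Equiv.Perm α) {r : ℕ} {x : α}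
    (h : ∀ k < r, F k x = x) : ((List.range r).map F).prod x = x := by
  induction r with
  | zero => rfl
  | succ r ih =>
    rw [List.range_succ, List.map_append, List.prod_append, List.map_singleton,
      List.prod_singleton, Equiv.Perm.mul_apply, h r r.lt_succ_self]
    exact ih fun k hk => h k (Nat.lt_succ_of_lt hk)

lemma prod_map_range_apply (F : ℕ → Equiv.Perm α) {r k₀ : ℕ} (hk₀ : k₀ < r) {S : Set α}
    (hS : Set.MapsTo (F k₀) S S) (hfix : ∀ k < r, k ≠ k₀ → ∀ x ∈ S, F k x = x)
    {x : α} (hx : x ∈ S) : ((List.range r).map F).prod x = F k₀ x := by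
  induction r with
  | zero => omega
  | succ r ih =>
    rw [List.range_succ, List.map_append, List.prod_append, List.map_singleton,
      List.prod_singleton, Equiv.Perm.mul_apply]
    rcases Nat.lt_succ_iff_lt_or_eq.mp hk₀ with hlt | rfl
    · rw [hfix r r.lt_succ_self (by omega) x hx]
      exact ih hlt fun k hk hne => hfix k (Nat.lt_succ_of_lt hk) hne
    · exact prod_map_range_apply_of_fix F fun k hk =>
        hfix k (Nat.lt_succ_of_lt hk) (by omega) _ (hS hx)

end ListProducts

section PartialSums

variable {l : List ℕ} {k : ℕ}

lemma sum_take_succ_eq (hk : k < l.length) :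
    (l.take (k + 1)).sum = (l.take k).sum + l.getD k 0 := by
  rw [List.sum_take_succ _ _ hk, List.getD_eq_getElem _ _ hk]

lemma sum_take_le_sum (k : ℕ) : (l.take k).sum ≤ l.sum := by
  rcases le_or_gt k l.length with hk | hk
  · simpa using List.monotone_sum_take l hk
  · rw [List.take_of_length_le hk.le]

lemma sum_take_add_getD_le_sum (hk : k < l.length) : (l.take k).sum + l.getD k 0 ≤ l.sum :=
  sum_take_succ_eq hk ▸ sum_take_le_sum (k + 1)

lemma getD_pos (hl : ∀ x ∈ l, 0 < x) (hk : k < l.length) : 0 < l.getD k 0 := by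
  rw [List.getD_eq_getElem _ _ hk]
  exact hl _ (List.getElem_mem hk)

lemma notMem_Ico_sum_take {k₀ x : ℕ} (hk : k < l.length) (hne : k ≠ k₀)
    (hk₀ : k₀ < l.length) (hx : x ∈ Set.Ico (l.take k₀).sum ((l.take k₀).sum + l.getD k₀ 0)) :
    x ∉ Set.Ico (l.take k).sum ((l.take k).sum + l.getD k 0) := by
  rw [← sum_take_succ_eq hk]
  rw [← sum_take_succ_eq hk₀] at hx
  obtain ⟨hx₁, hx₂⟩ := hx
  rintro ⟨h₁, h₂⟩
  rcases Nat.lt_or_gt_of_ne hne with hlt | hlt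
  · have := List.monotone_sum_take l (show k + 1 ≤ k₀ by omega)
    simp only at this
    omega
  · have := List.monotone_sum_take l (show k₀ + 1 ≤ k by omega)
    simp only at this
    omega

end PartialSums

section SignedPerm

variable {n : ℕ}

def boolSign (b : Bool) : ℂ := if b then 1 else -1

lemma boolSign_beq (a b : Bool) : boolSign (a == b) = boolSign a * boolSign b := by
  cases a <;> cases b <;> simp [boolSign]

lemma boolSign_ne_zero (b : Bool) : boolSign b ≠ 0 := by
  cases b <;> simp [boolSign]

def absApply (π : Equiv.Perm (P n)) (i : Fin n) : Fin n := (π (i, true)).1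

def signAt (π : Equiv.Perm (P n)) (i : Fin n) : ℂ := boolSign (π (i, true)).2

lemma IsSigned.apply {π : Equiv.Perm (P n)} (hπ : IsSigned n π) (i : Fin n) (b : Bool) :
    π (i, b) = (absApply π i, b == (π (i, true)).2) := by
  cases b
  · rw [show ((i, false) : P n) = negP n (i, true) from rfl, hπ, negP_apply]
    cases (π (i, true)).2 <;> rfl
  · simp [absApply]

lemma IsSigned.mul {σ ρ : Equiv.Perm (P n)} (hσ : IsSigned n σ) (hρ : IsSigned n ρ) :
    IsSigned n (σ * ρ) := fun p => by
  simp only [Equiv.Perm.mul_apply, hρ p, hσ (ρ p)]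

lemma absApply_mul {σ : Equiv.Perm (P n)} (hσ : IsSigned n σ) (ρ : Equiv.Perm (P n))
    (i : Fin n) : absApply (σ * ρ) i = absApply σ (absApply ρ i) := by
  rw [absApply, Equiv.Perm.mul_apply, ← Prod.mk.eta (p := ρ (i, true)), hσ.apply]
  rfl

lemma signAt_mul {σ : Equiv.Perm (P n)} (hσ : IsSigned n σ) (ρ : Equiv.Perm (P n))
    (i : Fin n) : signAt (σ * ρ) i = signAt σ (absApply ρ i) * signAt ρ i := by
  rw [signAt, Equiv.Perm.mul_apply, ← Prod.mk.eta (p := ρ (i, true)), hσ.apply, Bool.beq_comm,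
    boolSign_beq]
  rfl

lemma absApply_injective {π : Equiv.Perm (P n)} (hπ : IsSigned n π) :
    Function.Injective (absApply π) :=
  Function.LeftInverse.injective (g := absApply π⁻¹) fun i => by
    rw [← absApply_mul (isSigned_inv hπ), inv_mul_cancel]
    rfl

lemma IsSigned.list_prod {l : List (Equiv.Perm (P n))} (h : ∀ π ∈ l, IsSigned n π) :
    IsSigned n l.prod := by
  induction l with
  | nil => exact fun _ => rfl
  | cons π l ih =>
    rw [List.prod_cons]
    exact (h π List.mem_cons_self).mul (ih fun ρ hρ => h ρ (List.mem_cons_of_mem π hρ))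

end SignedPerm

section Relations

variable (n : ℕ) (u v : ℂ)

lemma wB_mul (σ τ : ↥(WB n)) : wB n u v σ * wB n u v τ = wB n u v (σ * τ) := by
  rw [wB, wB, wB, ← map_mul]
  exact RingQuot.mkAlgHom_rel ℂ (RelB.ww σ τ)

lemma wB_one : wB n u v 1 = 1 := by
  rw [wB, RingQuot.mkAlgHom_rel ℂ RelB.wone, map_one]

def wBHom : ↥(WB n) →* HB n u v where
  toFun := wB n u v
  map_one' := wB_one n u v
  map_mul' σ τ := (wB_mul n u v σ τ).symm

lemma cB_mul_self (i : Fin n) : cB n u v i * cB n u v i = 1 := by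
  rw [cB, ← map_mul, RingQuot.mkAlgHom_rel ℂ (RelB.csq i), map_one]

lemma cB_mul_cB_of_ne {i j : Fin n} (hij : i ≠ j) :
    cB n u v i * cB n u v j = (-1 : ℂ) • (cB n u v j * cB n u v i) := by
  refine Eq.trans ?_ (neg_one_smul ℂ (_ : HB n u v)).symm
  rw [cB, cB, ← map_mul, ← map_mul, ← map_neg]
  exact RingQuot.mkAlgHom_rel ℂ (RelB.cc i j hij)

variable {n}

lemma sgnSwap_apply (k : ℕ) (h : k + 1 < n) (j : Fin n) (b : Bool) :
    sgnSwap n k h (j, b) = (Equiv.swap ⟨k, Nat.lt_of_succ_lt h⟩ ⟨k + 1, h⟩ j, b) := by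
  cases b <;> simp only [sgnSwap, Equiv.Perm.mul_apply, Equiv.swap_apply_def, Prod.mk.injEq] <;>
    split_ifs <;> simp_all

lemma wB_sgnSwap_mul_cB (k : ℕ) (h : k + 1 < n) (j : Fin n) :
    wB n u v ⟨sgnSwap n k h, sgnSwap_mem_WB n k h⟩ * cB n u v j =
      cB n u v (Equiv.swap ⟨k, Nat.lt_of_succ_lt h⟩ ⟨k + 1, h⟩ j) *
        wB n u v ⟨sgnSwap n k h, sgnSwap_mem_WB n k h⟩ := by
  simp only [wB, cB, ← map_mul, Equiv.swap_apply_def]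
  split_ifs with h1 h2
  · subst h1
    exact RingQuot.mkAlgHom_rel ℂ (RelB.sc1 k h)
  · subst h2
    exact RingQuot.mkAlgHom_rel ℂ (RelB.sc2 k h)
  · exact RingQuot.mkAlgHom_rel ℂ
      (RelB.sc3 k h j (fun e => h1 (Fin.ext e)) (fun e => h2 (Fin.ext e)))

lemma sBn_apply (h : 0 < n) (j : Fin n) (b : Bool) :
    sBn n h (j, b) = (j, if j = ⟨n - 1, Nat.sub_lt h Nat.one_pos⟩ then !b else b) := by
  cases b <;> simp only [sBn, Equiv.swap_apply_def, Prod.mk.injEq] <;> split_ifs <;> simp_all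

lemma wB_sBn_mul_cB (h : 0 < n) (j : Fin n) :
    wB n u v ⟨sBn n h, sBn_mem_WB n h⟩ * cB n u v j =
      (if j = ⟨n - 1, Nat.sub_lt h Nat.one_pos⟩ then -1 else 1 : ℂ) •
        (cB n u v j * wB n u v ⟨sBn n h, sBn_mem_WB n h⟩) := by
  split_ifs with hj
  · subst hj
    refine Eq.trans ?_ (neg_one_smul ℂ (_ : HB n u v)).symm
    rw [wB, cB, ← map_mul, ← map_mul, ← map_neg]
    exact RingQuot.mkAlgHom_rel ℂ (RelB.snc h)
  · refine Eq.trans ?_ (one_smul ℂ (_ : HB n u v)).symm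
    rw [wB, cB, ← map_mul, ← map_mul]
    exact RingQuot.mkAlgHom_rel ℂ (RelB.snc' h j fun e => hj (Fin.ext e))

end Relations

section Conjugation

variable {n : ℕ} (u v : ℂ)

def cS (p : P n) : HB n u v := boolSign p.2 • cB n u v p.1

lemma semiconjBy_wB_cS {σ : Equiv.Perm (P n)} (hσ : σ ∈ WB n) (p : P n) :
    SemiconjBy (wB n u v ⟨σ, hσ⟩) (cS u v p) (cS u v (σ p)) := by
  induction hσ using Subgroup.closure_induction generalizing p with
  | mem x hx =>
    obtain ⟨j, b⟩ := p
    rcases hx with ⟨k, h, rfl⟩ | ⟨h, rfl⟩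
    · rw [SemiconjBy, sgnSwap_apply, cS, cS, mul_smul_comm, wB_sgnSwap_mul_cB, smul_mul_assoc]
    · rw [SemiconjBy, sBn_apply, cS, cS, mul_smul_comm, wB_sBn_mul_cB, smul_smul,
        smul_mul_assoc]
      congr 1
      split_ifs <;> cases b <;> simp [boolSign]
  | one => exact (wB_one n u v).symm ▸ SemiconjBy.one_left _
  | mul x y hx hy ihx ihy =>
    have h := (ihx (y p)).mul_left (ihy p)
    rwa [wB_mul] at h
  | inv x hx ih =>
    have h := (ih (x⁻¹ p)).units_inv_symm_left (a := (wBHom n u v).toHomUnits ⟨x, hx⟩)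
    rwa [← Equiv.Perm.mul_apply, mul_inv_cancel, Equiv.Perm.one_apply, ← map_inv] at h

lemma wB_mul_cB {σ : Equiv.Perm (P n)} (hσ : σ ∈ WB n) (i : Fin n) :
    wB n u v ⟨σ, hσ⟩ * cB n u v i =
      signAt σ i • (cB n u v (absApply σ i) * wB n u v ⟨σ, hσ⟩) := by
  have h := (semiconjBy_wB_cS u v hσ (i, true)).eq
  rwa [cS, boolSign, if_pos rfl, one_smul, cS, smul_mul_assoc] at h

end Conjugation

section CliffordMonomials

variable {n : ℕ} (u v : ℂ)

def cL (l : List (Fin n)) : HB n u v := (l.map (cB n u v)).prod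

@[simp] lemma cL_nil : cL u v ([] : List (Fin n)) = 1 := rfl

@[simp] lemma cL_cons (a : Fin n) (l : List (Fin n)) :
    cL u v (a :: l) = cB n u v a * cL u v l := List.prod_cons

@[simp] lemma cL_append (l₁ l₂ : List (Fin n)) :
    cL u v (l₁ ++ l₂) = cL u v l₁ * cL u v l₂ := by
  simp [cL]

lemma wB_mul_cL {σ : Equiv.Perm (P n)} (hσ : σ ∈ WB n) (l : List (Fin n)) :
    wB n u v ⟨σ, hσ⟩ * cL u v l =
      (l.map (signAt σ)).prod • (cL u v (l.map (absApply σ)) * wB n u v ⟨σ, hσ⟩) := by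
  induction l with
  | nil => simp
  | cons a l ih =>
    rw [cL_cons, ← mul_assoc, wB_mul_cB, smul_mul_assoc, mul_assoc, ih, mul_smul_comm,
      smul_smul, List.map_cons, List.map_cons, List.prod_cons, cL_cons, mul_assoc]

lemma cL_mul_cB_of_notMem {a : Fin n} {l : List (Fin n)} (ha : a ∉ l) :
    cL u v l * cB n u v a = (-1 : ℂ) ^ l.length • (cB n u v a * cL u v l) := by
  induction l with
  | nil => simp
  | cons b l ih =>
    have hba : b ≠ a := fun h => ha (h ▸ List.mem_cons_self)
    rw [cL_cons, mul_assoc, ih (fun h => ha (List.mem_cons_of_mem b h)), mul_smul_comm,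
      ← mul_assoc, cB_mul_cB_of_ne n u v hba, smul_mul_assoc, smul_smul, ← pow_succ, mul_assoc,
      ← cL_cons, List.length_cons]

lemma cL_rotate_one {l : List (Fin n)} (hl : l.Nodup) :
    cL u v (l.rotate 1) = (-1 : ℂ) ^ (l.length - 1) • cL u v l := by
  cases l with
  | nil => simp
  | cons a l =>
    rw [List.rotate_cons_succ, List.rotate_zero, cL_append, cL_cons, cL_nil, mul_one,
      cL_mul_cB_of_notMem u v (List.nodup_cons.mp hl).1, List.length_cons, Nat.add_sub_cancel,
      cL_cons]

lemma cL_mul_self {l : List (Fin n)} (hl : l.Nodup) :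
    cL u v l * cL u v l = (-1 : ℂ) ^ l.length.choose 2 • 1 := by
  induction l with
  | nil => simp
  | cons a l ih =>
    obtain ⟨ha, hl⟩ := List.nodup_cons.mp hl
    calc cL u v (a :: l) * cL u v (a :: l)
        = cB n u v a * (cL u v l * cB n u v a) * cL u v l := by simp only [cL_cons, mul_assoc]
      _ = (-1 : ℂ) ^ l.length • (cB n u v a * cB n u v a * (cL u v l * cL u v l)) := by
        rw [cL_mul_cB_of_notMem u v ha, mul_smul_comm, smul_mul_assoc]
        simp only [mul_assoc]
      _ = (-1 : ℂ) ^ (a :: l).length.choose 2 • 1 := by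
        rw [cB_mul_self, one_mul, ih hl, smul_smul, ← pow_add, List.length_cons,
          Nat.choose_succ_succ, Nat.choose_one_right]

end CliffordMonomials

section AnticommutingCycle

variable {n : ℕ}

/-- `l` lists, in cyclic order, a cycle of `π` whose signs multiply to `(-1) ^ |l|`: a positive
cycle of even length or a negative cycle of odd length. -/
structure IsAnticommutingCycle (π : Equiv.Perm (P n)) (l : List (Fin n)) : Prop where
  ne_nil : l ≠ []
  nodup : l.Nodup
  map_absApply : l.map (absApply π) = l.rotate 1
  prod_signAt : (l.map (signAt π)).prod = (-1) ^ l.length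

lemma IsAnticommutingCycle.conj {τ σ : Equiv.Perm (P n)} (hτ : IsSigned n τ)
    (hσ : IsSigned n σ) {l : List (Fin n)} (h : IsAnticommutingCycle σ l) :
    IsAnticommutingCycle (τ * σ * τ⁻¹) (l.map (absApply τ)) := by
  have hw : IsSigned n (τ * σ * τ⁻¹) := (hτ.mul hσ).mul (isSigned_inv hτ)
  have hwτ : τ * σ * τ⁻¹ * τ = τ * σ := by group
  have habs : absApply (τ * σ * τ⁻¹) ∘ absApply τ = absApply τ ∘ absApply σ := funext fun i => by
    rw [Function.comp_apply, ← absApply_mul hw, hwτ, absApply_mul hτ]; rfl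
  have hsign : (fun i => (signAt (τ * σ * τ⁻¹) ∘ absApply τ) i * signAt τ i) =
      fun i => (signAt τ ∘ absApply σ) i * signAt σ i := funext fun i => by
    rw [Function.comp_apply, ← signAt_mul hw, hwτ, signAt_mul hτ]; rfl
  have hτ_ne : (l.map (signAt τ)).prod ≠ 0 :=
    List.prod_ne_zero (by simp [signAt, boolSign_ne_zero])
  refine ⟨by simpa using h.ne_nil, h.nodup.map (absApply_injective hτ), ?_, ?_⟩
  · rw [List.map_map, habs, ← List.map_map, h.map_absApply, List.map_rotate]
  · refine mul_right_cancel₀ hτ_ne ?_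
    rw [List.map_map, ← List.prod_map_mul, hsign, List.prod_map_mul, ← List.map_map,
      h.map_absApply, List.map_rotate, (List.rotate_perm _ _).prod_eq, h.prod_signAt,
      List.length_map, mul_comm]

variable (u v : ℂ)

lemma IsAnticommutingCycle.wB_mem_commSpan {w : Equiv.Perm (P n)} (hw : w ∈ WB n)
    {l : List (Fin n)} (h : IsAnticommutingCycle w l) :
    wB n u v ⟨w, hw⟩ ∈ commSpan (HB n u v) := by
  have hodd : Odd (l.length + (l.length - 1)) :=
    ⟨l.length - 1, by have := List.length_pos_iff.mpr h.ne_nil; omega⟩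
  have hanti : wB n u v ⟨w, hw⟩ * cL u v l = -(cL u v l * wB n u v ⟨w, hw⟩) := by
    rw [wB_mul_cL, h.map_absApply, cL_rotate_one u v h.nodup, smul_mul_assoc, smul_smul,
      h.prod_signAt, ← pow_add, hodd.neg_one_pow]
    exact neg_one_smul ℂ (_ : HB n u v)
  exact mem_commSpan_of_mul_eq_neg (pow_ne_zero _ (neg_ne_zero.mpr one_ne_zero)) hanti
    (cL_mul_self u v h.nodup)

end AnticommutingCycle

open Fin.NatCast

section StandardCycles

def blockSet (n a m : ℕ) : Set (P n) := {p | (p.1 : ℕ) ∈ Set.Ico a (a + m)}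

def blockPts (n : ℕ) [NeZero n] (a m : ℕ) : List (Fin n) :=
  (List.range m).map fun j => ((a + j : ℕ) : Fin n)

variable {n : ℕ} [NeZero n]

lemma blockCycleF_natCast {a m j : ℕ} (hmn : a + m ≤ n) (hj : j < m) :
    blockCycleF n a m ((a + j : ℕ) : Fin n) = ((a + (j + 1) % m : ℕ) : Fin n) := by
  rw [blockCycleF, dif_pos (NeZero.pos n)]
  simp only [Equiv.Perm.mul_apply, Equiv.Perm.inv_def, Equiv.addLeft_symm, Equiv.coe_addLeft,
    Nat.cast_add, neg_add_cancel_left]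
  rcases Nat.lt_or_ge j (m - 1) with hlt | hge
  · have hcast : ((j : ℕ) : Fin n) < ((m - 1 : ℕ) : Fin n) := by
      rw [Fin.lt_def, Fin.val_cast_of_lt (by omega), Fin.val_cast_of_lt (by omega)]
      exact hlt
    rw [Fin.cycleRange_of_lt hcast, Nat.mod_eq_of_lt (by omega : j + 1 < m)]
    push_cast
    rfl
  · rw [Fin.cycleRange_of_eq (by rw [show j = m - 1 by omega]),
      show j + 1 = m by omega, Nat.mod_self]
    simp

lemma blockCycleF_of_notMem {a m : ℕ} (hm : 0 < m) (hmn : a + m ≤ n) {i : Fin n}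
    (hi : (i : ℕ) ∉ Set.Ico a (a + m)) : blockCycleF n a m i = i := by
  rw [blockCycleF, dif_pos (NeZero.pos n)]
  simp only [Equiv.Perm.mul_apply, Equiv.Perm.inv_def, Equiv.addLeft_symm, Equiv.coe_addLeft]
  suffices h : ((m - 1 : ℕ) : Fin n) < -(a : Fin n) + i by
    rw [Fin.cycleRange_of_gt h, add_neg_cancel_left]
  rw [← sub_eq_neg_add, Fin.lt_def, Fin.val_cast_of_lt (by omega)]
  rcases le_or_gt ((a : ℕ) : Fin n) i with hle | hlt
  · rw [Fin.coe_sub_iff_le.mpr hle, Fin.val_cast_of_lt (by omega)]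
    rw [Fin.le_def, Fin.val_cast_of_lt (by omega)] at hle
    simp only [Set.mem_Ico, not_and, not_lt] at hi
    have := hi hle
    omega
  · rw [Fin.coe_sub_iff_lt.mpr hlt, Fin.val_cast_of_lt (by omega)]
    omega

lemma blockCycleF_mem_Ico {a m : ℕ} (hmn : a + m ≤ n) {i : Fin n}
    (hi : (i : ℕ) ∈ Set.Ico a (a + m)) : (blockCycleF n a m i : ℕ) ∈ Set.Ico a (a + m) := by
  obtain ⟨hai, him⟩ := hi
  have hi' : i = ((a + (i - a : ℕ) : ℕ) : Fin n) := by
    ext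
    rw [Fin.val_cast_of_lt (by omega)]
    omega
  have hmod := Nat.mod_lt ((i : ℕ) - a + 1) (show 0 < m by omega)
  rw [hi', blockCycleF_natCast hmn (by omega), Fin.val_cast_of_lt (by omega)]
  exact ⟨by omega, by omega⟩

lemma flipAt_apply (k : ℕ) (i : Fin n) (b : Bool) :
    flipAt n k (i, b) = (i, if i = (k : Fin n) then !b else b) := by
  rw [flipAt, dif_pos (NeZero.pos n)]
  cases b <;> simp only [Equiv.swap_apply_def, Prod.mk.injEq] <;> split_ifs <;> simp_all

lemma negCycle_apply (a m : ℕ) (i : Fin n) (b : Bool) :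
    negCycle n a m (i, b) =
      (blockCycleF n a m i, if i = ((a + m - 1 : ℕ) : Fin n) then !b else b) := by
  rw [negCycle, Equiv.Perm.mul_apply, flipAt_apply]
  rfl

lemma posCycle_mapsTo_blockSet {a m : ℕ} (hmn : a + m ≤ n) :
    Set.MapsTo (posCycle n a m) (blockSet n a m) (blockSet n a m) :=
  fun _ hp => blockCycleF_mem_Ico hmn hp

lemma negCycle_mapsTo_blockSet {a m : ℕ} (hmn : a + m ≤ n) :
    Set.MapsTo (negCycle n a m) (blockSet n a m) (blockSet n a m) := fun p hp => by
  rw [← Prod.mk.eta (p := p), negCycle_apply]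
  exact blockCycleF_mem_Ico hmn hp

lemma posCycle_of_notMem {a m : ℕ} (hm : 0 < m) (hmn : a + m ≤ n) {p : P n}
    (hp : p ∉ blockSet n a m) : posCycle n a m p = p :=
  Prod.ext (blockCycleF_of_notMem hm hmn hp) rfl

lemma negCycle_of_notMem {a m : ℕ} (hm : 0 < m) (hmn : a + m ≤ n) {p : P n}
    (hp : p ∉ blockSet n a m) : negCycle n a m p = p := by
  have hlast : p.1 ≠ ((a + m - 1 : ℕ) : Fin n) := by
    rintro h
    apply hp
    simp only [blockSet, Set.mem_ofPred_eq, h, Fin.val_cast_of_lt (show a + m - 1 < n by omega),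
      Set.mem_Ico]
    omega
  rw [← Prod.mk.eta (p := p), negCycle_apply, blockCycleF_of_notMem hm hmn hp, if_neg hlast]

end StandardCycles

section Signedness

variable {n : ℕ}

lemma posCycle_isSigned (a m : ℕ) : IsSigned n (posCycle n a m) := fun _ => rfl

lemma flipAt_isSigned (k : ℕ) : IsSigned n (flipAt n k) := by
  rcases n.eq_zero_or_pos with rfl | hn
  · exact fun p => p.1.elim0
  · have : NeZero n := ⟨hn.ne'⟩
    rintro ⟨i, b⟩
    simp only [negP_apply, flipAt_apply]
    split_ifs <;> rfl

lemma negCycle_isSigned (a m : ℕ) : IsSigned n (negCycle n a m) :=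
  (posCycle_isSigned a m).mul (flipAt_isSigned _)

lemma stdRep_isSigned (ll lm : List ℕ) : IsSigned n (stdRep n ll lm) :=
  (IsSigned.list_prod (List.forall_mem_map.mpr fun _ _ => posCycle_isSigned _ _)).mul
    (IsSigned.list_prod (List.forall_mem_map.mpr fun _ _ => negCycle_isSigned _ _))

end Signedness

section StandardRepresentative

variable {n : ℕ} [NeZero n] {ll lm : List ℕ}

lemma stdRep_apply_of_mem_pos (hll : ∀ x ∈ ll, 0 < x) (hlm : ∀ x ∈ lm, 0 < x)
    (hsum : ll.sum + lm.sum ≤ n) {k : ℕ} (hk : k < ll.length) {p : P n}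
    (hp : p ∈ blockSet n (ll.take k).sum (ll.getD k 0)) :
    stdRep n ll lm p = posCycle n (ll.take k).sum (ll.getD k 0) p := by
  have hk_le := sum_take_add_getD_le_sum hk
  rw [stdRep, Equiv.Perm.mul_apply, prod_map_range_apply_of_fix
    (fun j => negCycle n (ll.sum + (lm.take j).sum) (lm.getD j 0)) fun j hj => ?_]
  · refine prod_map_range_apply (fun j => posCycle n (ll.take j).sum (ll.getD j 0)) hk
      (posCycle_mapsTo_blockSet (by omega)) (fun j hj hne q hq => ?_) hp
    have := sum_take_add_getD_le_sum hj
    exact posCycle_of_notMem (getD_pos hll hj) (by omega) (notMem_Ico_sum_take hj hne hk hq)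
  · have := sum_take_add_getD_le_sum hj
    have := sum_take_le_sum (l := lm) j
    refine negCycle_of_notMem (getD_pos hlm hj) (by omega) fun hq => ?_
    simp only [blockSet, Set.mem_ofPred_eq, Set.mem_Ico] at hp hq
    omega

lemma stdRep_apply_of_mem_neg (hll : ∀ x ∈ ll, 0 < x) (hlm : ∀ x ∈ lm, 0 < x)
    (hsum : ll.sum + lm.sum ≤ n) {k : ℕ} (hk : k < lm.length) {p : P n}
    (hp : p ∈ blockSet n (ll.sum + (lm.take k).sum) (lm.getD k 0)) :
    stdRep n ll lm p = negCycle n (ll.sum + (lm.take k).sum) (lm.getD k 0) p := by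
  have hk_le := sum_take_add_getD_le_sum hk
  have hmaps := negCycle_mapsTo_blockSet (n := n) (a := ll.sum + (lm.take k).sum)
    (m := lm.getD k 0) (by omega)
  rw [stdRep, Equiv.Perm.mul_apply, prod_map_range_apply
    (fun j => negCycle n (ll.sum + (lm.take j).sum) (lm.getD j 0)) hk hmaps
    (fun j hj hne q hq => ?_) hp, prod_map_range_apply_of_fix
    (fun j => posCycle n (ll.take j).sum (ll.getD j 0)) fun j hj => ?_]
  · have := sum_take_add_getD_le_sum hj
    refine posCycle_of_notMem (getD_pos hll hj) (by omega) fun hq => ?_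
    have hq' := hmaps hp
    simp only [blockSet, Set.mem_ofPred_eq, Set.mem_Ico] at hq hq'
    omega
  · have := sum_take_add_getD_le_sum hj
    refine negCycle_of_notMem (getD_pos hlm hj) (by omega) fun hq' => ?_
    simp only [blockSet, Set.mem_ofPred_eq, Set.mem_Ico] at hq hq'
    exact notMem_Ico_sum_take (x := q.1 - ll.sum) hj hne hk ⟨by omega, by omega⟩
      ⟨by omega, by omega⟩

lemma mem_blockSet_natCast {a m j : ℕ} (hmn : a + m ≤ n) (hj : j < m) (b : Bool) :
    (((a + j : ℕ) : Fin n), b) ∈ blockSet n a m := by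
  simp only [blockSet, Set.mem_ofPred_eq, Fin.val_cast_of_lt (show a + j < n by omega),
    Set.mem_Ico]
  omega

lemma isAnticommutingCycle_blockPts {π : Equiv.Perm (P n)} {a m : ℕ} (hm : 0 < m)
    (hmn : a + m ≤ n)
    (habs : ∀ j < m, absApply π ((a + j : ℕ) : Fin n) = blockCycleF n a m ((a + j : ℕ) : Fin n))
    (hsign : ((blockPts n a m).map (signAt π)).prod = (-1) ^ m) :
    IsAnticommutingCycle π (blockPts n a m) := by
  refine ⟨by simp [blockPts, hm.ne'], List.nodup_range.map_on fun x hx y hy hxy => ?_, ?_,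
    by simpa [blockPts] using hsign⟩
  · rw [List.mem_range] at hx hy
    have := congrArg Fin.val hxy
    rwa [Fin.val_cast_of_lt (by omega), Fin.val_cast_of_lt (by omega), Nat.add_left_cancel_iff]
      at this
  · refine List.ext_getElem (by simp [blockPts]) fun j hj _ => ?_
    simp only [blockPts, List.length_map, List.length_range] at hj
    simp only [blockPts, List.getElem_map, List.getElem_rotate, List.getElem_range,
      List.length_map, List.length_range]
    rw [habs j hj, blockCycleF_natCast hmn hj]

lemma stdRep_isAnticommutingCycle_pos (hll : ∀ x ∈ ll, 0 < x) (hlm : ∀ x ∈ lm, 0 < x)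
    (hsum : ll.sum + lm.sum ≤ n) {k : ℕ} (hk : k < ll.length) (heven : Even (ll.getD k 0)) :
    IsAnticommutingCycle (stdRep n ll lm) (blockPts n (ll.take k).sum (ll.getD k 0)) := by
  have hmn : (ll.take k).sum + ll.getD k 0 ≤ n := by
    have := sum_take_add_getD_le_sum hk; omega
  have happly (j : ℕ) (hj : j < ll.getD k 0) :
      stdRep n ll lm ((((ll.take k).sum + j : ℕ) : Fin n), true) =
        (blockCycleF n (ll.take k).sum (ll.getD k 0) (((ll.take k).sum + j : ℕ) : Fin n), true) :=
    stdRep_apply_of_mem_pos hll hlm hsum hk (mem_blockSet_natCast hmn hj true)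
  refine isAnticommutingCycle_blockPts (getD_pos hll hk) hmn
    (fun j hj => congrArg Prod.fst (happly j hj)) ?_
  rw [heven.neg_one_pow]
  refine List.prod_eq_one fun x hx => ?_
  simp only [blockPts, List.map_map, List.mem_map, List.mem_range] at hx
  obtain ⟨j, hj, rfl⟩ := hx
  rw [Function.comp_apply, signAt, happly j hj]
  rfl

lemma stdRep_isAnticommutingCycle_neg (hll : ∀ x ∈ ll, 0 < x) (hlm : ∀ x ∈ lm, 0 < x)
    (hsum : ll.sum + lm.sum ≤ n) {k : ℕ} (hk : k < lm.length) (hodd : Odd (lm.getD k 0)) :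
    IsAnticommutingCycle (stdRep n ll lm)
      (blockPts n (ll.sum + (lm.take k).sum) (lm.getD k 0)) := by
  set a := ll.sum + (lm.take k).sum
  set m := lm.getD k 0
  have hmn : a + m ≤ n := by
    have := sum_take_add_getD_le_sum hk; omega
  have happly (j : ℕ) (hj : j < m) :
      stdRep n ll lm (((a + j : ℕ) : Fin n), true) =
        (blockCycleF n a m ((a + j : ℕ) : Fin n),
          if ((a + j : ℕ) : Fin n) = ((a + m - 1 : ℕ) : Fin n) then false else true) := by
    rw [stdRep_apply_of_mem_neg hll hlm hsum hk (mem_blockSet_natCast hmn hj true),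
      negCycle_apply]
    rfl
  have hsign (j : ℕ) (hj : j < m) :
      signAt (stdRep n ll lm) ((a + j : ℕ) : Fin n) = if j = m - 1 then -1 else 1 := by
    have hiff : ((a + j : ℕ) : Fin n) = ((a + m - 1 : ℕ) : Fin n) ↔ j = m - 1 := by
      rw [Fin.ext_iff, Fin.val_cast_of_lt (by omega), Fin.val_cast_of_lt (by omega)]
      omega
    rw [signAt, happly j hj]
    simp only [hiff]
    split_ifs <;> rfl
  refine isAnticommutingCycle_blockPts (getD_pos hlm hk) hmn
    (fun j hj => congrArg Prod.fst (happly j hj)) ?_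
  obtain ⟨m', hm'⟩ : ∃ m', m = m' + 1 := ⟨m - 1, by have := getD_pos hlm hk; omega⟩
  have hones : ((List.range m').map fun j => signAt (stdRep n ll lm) ((a + j : ℕ) : Fin n)).prod
      = 1 :=
    List.prod_eq_one fun x hx => by
      simp only [List.mem_map, List.mem_range] at hx
      obtain ⟨j, hj, rfl⟩ := hx
      rw [hsign j (by omega), if_neg (by omega)]
  rw [hodd.neg_one_pow, blockPts, hm', List.range_succ, List.map_append, List.map_append,
    List.prod_append, List.map_map, List.map_singleton, List.map_singleton, List.prod_singleton,
    Function.comp_def, hones, one_mul, hsign m' (by omega), if_pos (by omega)]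

end StandardRepresentative

lemma exists_isAnticommutingCycle_stdRep {n : ℕ} {ll lm : List ℕ} (hll : ∀ x ∈ ll, 0 < x)
    (hlm : ∀ x ∈ lm, 0 < x) (hsum : ll.sum + lm.sum ≤ n)
    (hbad : (∃ a ∈ ll, Even a) ∨ (∃ a ∈ lm, Odd a)) :
    ∃ l : List (Fin n), IsAnticommutingCycle (stdRep n ll lm) l := by
  rcases hbad with ⟨a, ha, heven⟩ | ⟨a, ha, hodd⟩
  · have : NeZero n := ⟨by have := List.le_sum_of_mem ha; have := hll a ha; omega⟩
    obtain ⟨k, hk, rfl⟩ := List.mem_iff_getElem.mp ha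
    rw [← List.getD_eq_getElem _ 0 hk] at heven
    exact ⟨_, stdRep_isAnticommutingCycle_pos hll hlm hsum hk heven⟩
  · have : NeZero n := ⟨by have := List.le_sum_of_mem ha; have := hlm a ha; omega⟩
    obtain ⟨k, hk, rfl⟩ := List.mem_iff_getElem.mp ha
    rw [← List.getD_eq_getElem _ 0 hk] at hodd
    exact ⟨_, stdRep_isAnticommutingCycle_neg hll hlm hsum hk hodd⟩

lemma mem_sortDescM {s : Multiset ℕ} {x : ℕ} : x ∈ sortDescM s ↔ x ∈ s := by
  rw [sortDescM, List.mem_reverse, Multiset.mem_sort]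

lemma sum_sortDescM (s : Multiset ℕ) : (sortDescM s).sum = s.sum := by
  rw [sortDescM, List.sum_reverse, ← Multiset.sum_coe, Multiset.sort_eq]

end

theorem signed_perm_vanishing_typeB_general (n : ℕ) (u v : ℂ)
    (lam mu : Multiset ℕ) (hposl : ∀ a ∈ lam, 0 < a) (hposm : ∀ a ∈ mu, 0 < a)
    (hsum : lam.sum + mu.sum = n)
    (hbad : (∃ a ∈ lam, Even a) ∨ (∃ a ∈ mu, Odd a))
    (w : Equiv.Perm (P n)) (hw : w ∈ WB n) (hct : CycType n w lam mu) :
    wB n u v ⟨w, hw⟩ ∈ commSpan (HB n u v) := by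
  obtain ⟨τ, hτ, rfl⟩ := hct
  obtain ⟨l, hl⟩ := exists_isAnticommutingCycle_stdRep
    (fun a ha => hposl a (mem_sortDescM.mp ha)) (fun a ha => hposm a (mem_sortDescM.mp ha))
    (by rw [sum_sortDescM, sum_sortDescM, hsum]) (by simpa only [mem_sortDescM] using hbad)
  exact (hl.conj hτ (stdRep_isSigned _ _)).wB_mem_commSpan u v hw

/-- If the bipartition `(λ, μ)` of `n` has an even part in `λ` or an
odd part in `μ`, then every `w ∈ W_{B_n}` of cycle type `(λ, μ)` lies in the span of
commutators of `ℌ_{B_n}`. -/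
theorem signed_perm_vanishing_typeB (n : ℕ) (hn : 2 ≤ n) (u v : ℂ)
    (lam mu : Multiset ℕ) (hposl : ∀ a ∈ lam, 0 < a) (hposm : ∀ a ∈ mu, 0 < a)
    (hsum : lam.sum + mu.sum = n)
    (hbad : (∃ a ∈ lam, Even a) ∨ (∃ a ∈ mu, Odd a))
    (w : Equiv.Perm (P n)) (hw : w ∈ WB n) (hct : CycType n w lam mu) :
    wB n u v ⟨w, hw⟩ ∈ commSpan (HB n u v) :=
  signed_perm_vanishing_typeB_general n u v lam mu hposl hposm hsum hbad w hw hct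

end DAHCBD
end

section
/- Let n ≥ 2 and u ∈ ℂ. Let γ = (γ_1,…,γ_k) be a composition of n with blocks B_j = {γ_1+⋯+γ_{j−1}+1, …, γ_1+⋯+γ_j}, and set w_γ = w_{γ_1} ⋯ w_{γ_k} ∈ S_n, where w_{γ_j} = s_{a+1} s_{a+2} ⋯ s_{a+γ_j−1} with a = γ_1+⋯+γ_{j−1}. Let I ⊆ {1,…,n} with |I| even, and set I_j = I ∩ B_j. If |I_j| is even for every j, then there exists ε ∈ {1, −1} such that w_γ c_I − ε w_γ ∈ [ℌ_A, ℌ_A]; otherwise w_γ c_I ∈ [ℌ_A, ℌ_A]. -/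
/-!
Write `σ = w_γ` and `x ≡ y` for `x - y ∈ [ℌ_A, ℌ_A]`. Since `c_{σ a} σ = σ c_a`, conjugating by
`c_{σ a}` gives `σ c_a X ≡ σ X c_{σ a}`; for `X = c_M` with `σ a ∉ M`, moving `c_{σ a}` back to
the front costs the sign `(-1)^{|M|}`. On each block `σ` is the cycle `x ↦ x + 1`, so repeating
this walks the smallest element `a` of `I` up to the next element `b` of `I` in its block, where
`c_b² = 1` removes the pair: `σ c_I ≡ ± σ c_{I ∖ {a, b}}`. If instead `a` is alone in its block,
the cycle `τ` of that block commutes with `σ`, agrees with it at `a` and fixes `I ∖ {a}`, so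
conjugating by `τ` gives `σ c_I ≡ σ c_{σ a} c_{I ∖ {a}}`, whereas the first move gives the same
up to the sign `(-1)^{|I| - 1} = -1`; hence `σ c_I ≡ 0`.
-/

open scoped BigOperators

namespace DAHCA

/-- The permutation `w_γ` attached to a composition `γ` of `n`: the product of the
cycles on the consecutive blocks of `γ`. -/
def wGamma (n : ℕ) (γ : List ℕ) : Equiv.Perm (Fin n) :=
  ((List.range γ.length).map fun k => wSeg n ((γ.take k).sum) ((γ.take (k + 1)).sum)).prod

end DAHCA

theorem List.even_countP_cons_cons_iff {α : Type*} {p : α → Bool} {a b : α} (hab : p a = p b)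
    (M : List α) : Even ((a :: b :: M).countP p) ↔ Even (M.countP p) := by
  cases hb : p b <;> simp [hab, hb, Nat.even_add_one]

theorem Finset.countP_sort_eq_card_filter {α : Type*} [LinearOrder α] (I : Finset α)
    (p : α → Prop) [DecidablePred p] :
    (I.sort (· ≤ ·)).countP (fun a => p a) = (I.filter p).card := by
  rw [← Multiset.coe_countP, Finset.sort_eq, Multiset.countP_eq_card_filter]
  rfl

namespace DAHCA

section Cocenter

variable {A : Type*} [Ring A] [Algebra ℂ A]

def toCocenter : A →ₗ[ℂ] A ⧸ commSpan A := (commSpan A).mkQ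

theorem toCocenter_mul_comm (a b : A) : toCocenter (a * b) = toCocenter (b * a) :=
  (Submodule.Quotient.eq _).2 (Submodule.subset_span ⟨a, b, rfl⟩)

theorem toCocenter_conj {g h : A} (hgh : g * h = 1) (x : A) :
    toCocenter (h * x * g) = toCocenter x := by
  rw [mul_assoc, toCocenter_mul_comm, mul_assoc, hgh, mul_one]

end Cocenter

section Relations

variable {n : ℕ} {u : ℂ}

theorem wH_mul_wH (σ τ : Equiv.Perm (Fin n)) : wH n u σ * wH n u τ = wH n u (σ * τ) := by
  simpa [wH] using RingQuot.mkAlgHom_rel ℂ (Rel.ww (u := u) σ τ)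

theorem wH_one : wH n u 1 = 1 := by
  simpa [wH] using RingQuot.mkAlgHom_rel ℂ (Rel.wone (n := n) (u := u))

end Relations

section CliffordWords

variable {n : ℕ} {u : ℂ}

noncomputable def cList (n : ℕ) (u : ℂ) (L : List (Fin n)) : HA n u := (L.map (cH n u)).prod

@[simp]
theorem cList_nil : cList n u [] = 1 := rfl

@[simp]
theorem cList_cons (a : Fin n) (L : List (Fin n)) :
    cList n u (a :: L) = cH n u a * cList n u L := by
  simp [cList]

theorem wH_mul_cList (σ : Equiv.Perm (Fin n)) (L : List (Fin n)) :
    wH n u σ * cList n u L = cList n u (L.map σ) * wH n u σ := by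
  induction L with
  | nil => simp
  | cons a L ih => rw [cList_cons, ← mul_assoc, wH_mul_cH, mul_assoc, ih, List.map_cons,
      cList_cons, mul_assoc]

theorem cList_mul_cH_of_notMem {a : Fin n} {M : List (Fin n)} (ha : a ∉ M) :
    cList n u M * cH n u a = (-1 : ℂ) ^ M.length • (cH n u a * cList n u M) := by
  induction M with
  | nil => simp
  | cons m M ih =>
    obtain ⟨hma, haM⟩ : m ≠ a ∧ a ∉ M := by simpa [eq_comm] using ha
    rw [cList_cons, mul_assoc, ih haM, mul_smul_comm, ← mul_assoc, cH_mul_cH_of_ne hma,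
      neg_mul (cH n u a * cH n u m) (cList n u M), smul_neg, List.length_cons, pow_succ, mul_smul,
      smul_comm _ (-1 : ℂ), neg_one_smul, mul_assoc]

variable (σ : Equiv.Perm (Fin n))

theorem toCocenter_wH_mul_cH_mul (a : Fin n) (X : HA n u) :
    toCocenter (wH n u σ * (cH n u a * X)) = toCocenter (wH n u σ * X * cH n u (σ a)) := by
  rw [← mul_assoc, wH_mul_cH, mul_assoc, toCocenter_mul_comm]

theorem toCocenter_wH_mul_cList_cons {a : Fin n} {M : List (Fin n)} (hM : σ a ∉ M) :
    toCocenter (wH n u σ * cList n u (a :: M)) =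
      (-1 : ℂ) ^ M.length • toCocenter (wH n u σ * cList n u (σ a :: M)) := by
  rw [cList_cons, toCocenter_wH_mul_cH_mul, mul_assoc, cList_mul_cH_of_notMem hM, mul_smul_comm,
    map_smul, cList_cons]

theorem toCocenter_wH_mul_cList_cons_cons {a b : Fin n} {M : List (Fin n)} (hab : σ a = b)
    (hM : b ∉ M) :
    toCocenter (wH n u σ * cList n u (a :: b :: M)) =
      (-1 : ℂ) ^ M.length • toCocenter (wH n u σ * cList n u M) := by
  rw [cList_cons, toCocenter_wH_mul_cH_mul, hab, cList_cons, mul_assoc, mul_assoc,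
    cList_mul_cH_of_notMem hM, mul_smul_comm, mul_smul_comm, ← mul_assoc (cH n u b), cH_mul_self,
    one_mul, map_smul]

theorem toCocenter_wH_mul_cList_map {τ : Equiv.Perm (Fin n)} (hτ : Commute τ σ)
    (L : List (Fin n)) :
    toCocenter (wH n u σ * cList n u (L.map τ)) = toCocenter (wH n u σ * cList n u L) := by
  rw [← toCocenter_conj (g := wH n u τ⁻¹) (by rw [wH_mul_wH, inv_mul_cancel, wH_one])
      (wH n u σ * cList n u L)]
  congr 1
  rw [← mul_assoc (wH n u τ), wH_mul_wH, hτ.eq, ← wH_mul_wH, mul_assoc (wH n u σ),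
    wH_mul_cList τ L, mul_assoc, mul_assoc, wH_mul_wH, mul_inv_cancel, wH_one, mul_one]

theorem toCocenter_wH_mul_cList_cons_eq_zero {τ : Equiv.Perm (Fin n)} (hτ : Commute τ σ)
    {a : Fin n} {M : List (Fin n)} (hτa : τ a = σ a) (hτM : ∀ m ∈ M, τ m = m) (hM : σ a ∉ M)
    (hodd : Odd M.length) :
    toCocenter (wH n u σ * cList n u (a :: M)) = 0 := by
  have hmap : (a :: M).map τ = σ a :: M := by
    rw [List.map_cons, hτa, List.map_congr_left hτM, List.map_id']
  have h := toCocenter_wH_mul_cList_cons (u := u) σ hM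
  rw [hodd.neg_one_pow, neg_one_smul, ← hmap, toCocenter_wH_mul_cList_map σ hτ] at h
  have h2 : (2 : ℂ) • toCocenter (wH n u σ * cList n u (a :: M)) = 0 := by
    rw [two_smul]; nth_rw 2 [h]; exact add_neg_cancel _
  exact (smul_eq_zero.1 h2).resolve_left two_ne_zero

end CliffordWords

section Cycles

variable {n : ℕ}

theorem sA_val {i : ℕ} (h : i + 1 < n) (x : Fin n) :
    (sA n i h x : ℕ) = if (x : ℕ) = i then i + 1 else if (x : ℕ) = i + 1 then i else x := by
  unfold sA
  rw [Equiv.swap_apply_def]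
  split_ifs <;> simp_all [Fin.ext_iff]

theorem wSeg_of_le {l r : ℕ} (h : r ≤ l + 1) : wSeg n l r = 1 := by
  simp [wSeg, show r - l - 1 = 0 by omega]

theorem wSeg_add_two (l m : ℕ) (h : l + m + 1 < n) :
    wSeg n l (l + m + 2) = wSeg n l (l + m + 1) * sA n (l + m) h := by
  simp [wSeg, show l + m + 2 - l - 1 = m + 1 by omega, show l + m + 1 - l - 1 = m by omega,
    List.range_succ, h]

theorem wSeg_val {l r : ℕ} (hr : r ≤ n) (x : Fin n) :
    (wSeg n l r x : ℕ) =
      if (x : ℕ) < l ∨ r ≤ x then (x : ℕ) else if (x : ℕ) + 1 < r then (x : ℕ) + 1 else l := by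
  obtain hrl | ⟨m, rfl⟩ : r ≤ l + 1 ∨ ∃ m, r = l + m + 1 := by
    rcases Nat.lt_or_ge (l + 1) r with h | h
    · exact Or.inr ⟨r - l - 1, by omega⟩
    · exact Or.inl h
  · rw [wSeg_of_le hrl, Equiv.Perm.one_apply]
    split_ifs <;> omega
  · induction m generalizing x with
    | zero =>
      rw [wSeg_of_le le_rfl, Equiv.Perm.one_apply]
      split_ifs <;> omega
    | succ m ih =>
      rw [show l + (m + 1) + 1 = l + m + 2 by omega, wSeg_add_two l m (by omega),
        Equiv.Perm.mul_apply, ih _ (by omega), sA_val]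
      split_ifs <;> omega

end Cycles

section Blocks

variable {γ : List ℕ}

def InBlock (γ : List ℕ) (k x : ℕ) : Prop :=
  (γ.take k).sum ≤ x ∧ x < (γ.take (k + 1)).sum

instance (γ : List ℕ) (k : ℕ) : DecidablePred (InBlock γ k) := fun _ => instDecidableAnd

theorem InBlock.eq {j k x : ℕ} (hj : InBlock γ j x) (hk : InBlock γ k x) : j = k := by
  unfold InBlock at hj hk
  rcases lt_trichotomy j k with h | h | h
  · have : (γ.take (j + 1)).sum ≤ (γ.take k).sum := γ.monotone_sum_take h
    omega
  · exact h
  · have : (γ.take (k + 1)).sum ≤ (γ.take j).sum := γ.monotone_sum_take h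
    omega

theorem InBlock.lt_length {k x : ℕ} (hx : InBlock γ k x) : k < γ.length := by
  by_contra hk
  unfold InBlock at hx
  rw [List.take_of_length_le (by omega), List.take_of_length_le (by omega)] at hx
  omega

theorem exists_inBlock {x : ℕ} (hx : x < γ.sum) : ∃ k, InBlock γ k x := by
  induction γ generalizing x with
  | nil => simp at hx
  | cons g γ ih =>
    by_cases hxg : x < g
    · exact ⟨0, by simpa [InBlock] using hxg⟩
    · obtain ⟨k, hk⟩ := ih (x := x - g) (by simp only [List.sum_cons] at hx; omega)
      refine ⟨k + 1, ?_⟩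
      simp only [InBlock, List.take_succ_cons, List.sum_cons] at hk ⊢
      omega

variable {n : ℕ}

def wBlock (n : ℕ) (γ : List ℕ) (k : ℕ) : Equiv.Perm (Fin n) :=
  wSeg n ((γ.take k).sum) ((γ.take (k + 1)).sum)

variable (hsum : γ.sum = n)
include hsum

theorem wBlock_val (k : ℕ) (x : Fin n) :
    (wBlock n γ k x : ℕ) =
      if InBlock γ k x then
        (if (x : ℕ) + 1 < (γ.take (k + 1)).sum then (x : ℕ) + 1 else (γ.take k).sum)
      else (x : ℕ) := by
  rw [wBlock, wSeg_val (hsum ▸ (List.take_sublist _ γ).sum_le_sum fun _ _ => Nat.zero_le _)]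
  by_cases hx : InBlock γ k x <;> simp only [hx, if_true, if_false] <;> unfold InBlock at hx <;>
    split_ifs <;> omega

theorem wBlock_apply_of_not_inBlock {k : ℕ} {x : Fin n} (hx : ¬ InBlock γ k x) :
    wBlock n γ k x = x :=
  Fin.ext (by rw [wBlock_val hsum, if_neg hx])

theorem disjoint_wBlock {j k : ℕ} (hjk : j ≠ k) : (wBlock n γ j).Disjoint (wBlock n γ k) := by
  intro x
  by_cases hj : InBlock γ j x
  · exact Or.inr (wBlock_apply_of_not_inBlock hsum fun hk => hjk (hj.eq hk))
  · exact Or.inl (wBlock_apply_of_not_inBlock hsum hj)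

theorem wGamma_apply_of_inBlock {k : ℕ} {x : Fin n} (hx : InBlock γ k x) :
    wGamma n γ x = wBlock n γ k x := by
  have hmem : wBlock n γ k ∈ (List.range γ.length).map (wBlock n γ) :=
    List.mem_map_of_mem (List.mem_range.2 hx.lt_length)
  by_cases hfix : wBlock n γ k x = x
  · rw [hfix]
    refine List.prod_induction (fun p : Equiv.Perm (Fin n) => p x = x)
      (fun p q hp hq => by rw [Equiv.Perm.mul_apply, hq, hp]) rfl ?_
    simp only [List.mem_map, List.mem_range]
    rintro _ ⟨j, -, rfl⟩
    rcases eq_or_ne j k with rfl | hjk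
    · exact hfix
    · exact wBlock_apply_of_not_inBlock hsum fun hj => hjk (hj.eq hx)
  · exact (Equiv.Perm.eq_on_support_mem_disjoint hmem
      (List.pairwise_map.2 (List.nodup_range.imp (disjoint_wBlock hsum))) x
      (Equiv.Perm.mem_support.2 hfix)).symm

theorem commute_wBlock_wGamma (k : ℕ) : Commute (wBlock n γ k) (wGamma n γ) := by
  refine Commute.list_prod_right _ _ fun p hp => ?_
  obtain ⟨j, -, rfl⟩ := List.mem_map.1 hp
  rcases eq_or_ne k j with rfl | hkj
  · exact Commute.refl _
  · exact (disjoint_wBlock hsum hkj).commute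

theorem wGamma_val {k : ℕ} {x : Fin n} (hx : InBlock γ k x) :
    (wGamma n γ x : ℕ) =
      if (x : ℕ) + 1 < (γ.take (k + 1)).sum then (x : ℕ) + 1 else (γ.take k).sum := by
  rw [wGamma_apply_of_inBlock hsum hx, wBlock_val hsum, if_pos hx]

theorem inBlock_wGamma {k : ℕ} {x : Fin n} (hx : InBlock γ k x) :
    InBlock γ k (wGamma n γ x) := by
  have := wGamma_val hsum hx
  unfold InBlock at hx ⊢
  split_ifs at this <;> omega

theorem wGamma_val_eq_succ {k y : ℕ} {a : Fin n} (ha : InBlock γ k a) (hy : InBlock γ k y)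
    (hay : (a : ℕ) < y) : (wGamma n γ a : ℕ) = a + 1 := by
  rw [wGamma_val hsum ha]
  unfold InBlock at hy
  split_ifs <;> omega

end Blocks

section Reduction

variable {n : ℕ} (u : ℂ) {γ : List ℕ}

def BlocksEven (γ : List ℕ) (L : List (Fin n)) : Prop :=
  ∀ k < γ.length, Even (L.countP fun i : Fin n => InBlock γ k i)

theorem blocksEven_cons_cons_iff {k : ℕ} {a b : Fin n} (ha : InBlock γ k a) (hb : InBlock γ k b)
    (M : List (Fin n)) : BlocksEven γ (a :: b :: M) ↔ BlocksEven γ M :=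
  forall₂_congr fun j _ => by
    refine List.even_countP_cons_cons_iff (p := fun i : Fin n => InBlock γ j i)
      (decide_eq_decide.2 ?_) M
    exact ⟨fun hj => hj.eq ha ▸ hb, fun hj => hj.eq hb ▸ ha⟩

theorem not_blocksEven_cons {k : ℕ} {a : Fin n} {T : List (Fin n)} (ha : InBlock γ k a)
    (hT : ∀ t ∈ T, (γ.take (k + 1)).sum ≤ t) : ¬ BlocksEven γ (a :: T) := by
  intro h
  have hT0 : T.countP (fun i : Fin n => InBlock γ k i) = 0 :=
    List.countP_eq_zero.2 fun t ht hkt =>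
      absurd (of_decide_eq_true hkt).2 (hT t ht).not_gt
  have := h k ha.lt_length
  rw [List.countP_cons, hT0, if_pos (decide_eq_true ha)] at this
  exact Nat.not_even_one this

variable (hsum : γ.sum = n)
include hsum

theorem exists_toCocenter_wH_wGamma_mul_cList_cons_cons {k : ℕ} {a b : Fin n}
    (ha : InBlock γ k a) (hb : InBlock γ k b) (hab : a < b) {M : List (Fin n)}
    (hM : ∀ m ∈ M, b < m) :
    ∃ s : ℕ, toCocenter (wH n u (wGamma n γ) * cList n u (a :: b :: M)) =
      (-1 : ℂ) ^ s • toCocenter (wH n u (wGamma n γ) * cList n u M) := by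
  obtain ⟨d, hd⟩ : ∃ d, (b : ℕ) = a + d + 1 := ⟨b - a - 1, by omega⟩
  have hbM : b ∉ M := fun h => lt_irrefl b (hM b h)
  induction d generalizing a with
  | zero =>
    have hσa : wGamma n γ a = b := Fin.ext (by rw [wGamma_val_eq_succ hsum ha hb hab, hd])
    exact ⟨M.length, toCocenter_wH_mul_cList_cons_cons _ hσa hbM⟩
  | succ d ih =>
    have hσa := wGamma_val_eq_succ hsum ha hb hab
    have hσaM : wGamma n γ a ∉ b :: M := by
      rintro (h | ⟨_, h⟩)
      · omega
      · exact absurd (hM _ h) (by rw [Fin.lt_def]; omega)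
    obtain ⟨s, hs⟩ := ih (inBlock_wGamma hsum ha) (by rw [Fin.lt_def]; omega) (by omega)
    refine ⟨(b :: M).length + s, ?_⟩
    rw [toCocenter_wH_mul_cList_cons _ hσaM, hs, smul_smul, pow_add]

theorem toCocenter_wH_wGamma_mul_cList_cons_eq_zero {k : ℕ} {a : Fin n} {T : List (Fin n)}
    (ha : InBlock γ k a) (hT : ∀ t ∈ T, (γ.take (k + 1)).sum ≤ t) (hodd : Odd T.length) :
    toCocenter (wH n u (wGamma n γ) * cList n u (a :: T)) = 0 :=
  toCocenter_wH_mul_cList_cons_eq_zero _ (commute_wBlock_wGamma hsum k)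
    (wGamma_apply_of_inBlock hsum ha).symm
    (fun t ht => wBlock_apply_of_not_inBlock hsum fun hkt => (hT t ht).not_gt hkt.2)
    (fun hσa => (hT _ hσa).not_gt (inBlock_wGamma hsum ha).2) hodd

theorem toCocenter_wH_wGamma_mul_cList :
    ∀ L : List (Fin n), L.Pairwise (· < ·) → Even L.length →
      (BlocksEven γ L → ∃ s : ℕ, toCocenter (wH n u (wGamma n γ) * cList n u L) =
        (-1 : ℂ) ^ s • toCocenter (wH n u (wGamma n γ))) ∧
      (¬ BlocksEven γ L → toCocenter (wH n u (wGamma n γ) * cList n u L) = 0)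
  | [], _, _ => ⟨fun _ => ⟨0, by simp⟩, fun h => absurd (fun k _ => by simp) h⟩
  | [_], _, h => absurd h (by simp)
  | a :: b :: M, hL, heven => by
    obtain ⟨⟨hab, -⟩, hbM, hM⟩ : (a < b ∧ ∀ m ∈ M, a < m) ∧ (∀ m ∈ M, b < m) ∧
        M.Pairwise (· < ·) := by
      simpa using hL
    obtain ⟨k, ha⟩ := exists_inBlock (hsum ▸ a.isLt : (a : ℕ) < γ.sum)
    by_cases hb : InBlock γ k b
    · obtain ⟨s, hs⟩ := exists_toCocenter_wH_wGamma_mul_cList_cons_cons u hsum ha hb hab hbM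
      obtain ⟨ihEven, ihOdd⟩ :=
        toCocenter_wH_wGamma_mul_cList M hM (by simpa [Nat.even_add_one] using heven)
      rw [blocksEven_cons_cons_iff ha hb, hs]
      refine ⟨fun h => ?_, fun h => by rw [ihOdd h, smul_zero]⟩
      obtain ⟨t, ht⟩ := ihEven h
      exact ⟨s + t, by rw [ht, smul_smul, pow_add]⟩
    · have hbk : (γ.take (k + 1)).sum ≤ b := by
        unfold InBlock at ha hb
        rw [Fin.lt_def] at hab
        omega
      have hT : ∀ t ∈ b :: M, (γ.take (k + 1)).sum ≤ t := by
        rintro t (_ | ⟨_, ht⟩)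
        · exact hbk
        · exact hbk.trans (hbM t ht).le
      exact ⟨fun h => absurd h (not_blocksEven_cons ha hT), fun _ =>
        toCocenter_wH_wGamma_mul_cList_cons_eq_zero u hsum ha hT
          (by simpa [Nat.even_add_one, ← Nat.not_even_iff_odd] using heven)⟩

end Reduction

theorem wGamma_clifford_reduction_general (n : ℕ) (u : ℂ)
    (γ : List ℕ) (hsum : γ.sum = n)
    (I : Finset (Fin n)) (hI : Even I.card) :
    ((∀ k < γ.length,
        Even ((I.filter fun i : Fin n =>
          (γ.take k).sum ≤ (i : ℕ) ∧ (i : ℕ) < (γ.take (k + 1)).sum).card)) →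
      ∃ ε : ℂ, (ε = 1 ∨ ε = -1) ∧
        wH n u (wGamma n γ) * cProd n u I - ε • wH n u (wGamma n γ) ∈
          commSpan (HA n u)) ∧
    ((¬ ∀ k < γ.length,
        Even ((I.filter fun i : Fin n =>
          (γ.take k).sum ≤ (i : ℕ) ∧ (i : ℕ) < (γ.take (k + 1)).sum).card)) →
      wH n u (wGamma n γ) * cProd n u I ∈ commSpan (HA n u)) := by
  obtain ⟨hEven, hOdd⟩ := toCocenter_wH_wGamma_mul_cList u hsum (I.sort (· ≤ ·))
    (List.sortedLT_iff_pairwise.1 I.sortedLT_sort) (by rwa [Finset.length_sort])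
  simp only [BlocksEven, Finset.countP_sort_eq_card_filter] at hEven hOdd
  refine ⟨fun h => ?_, fun h => (Submodule.Quotient.mk_eq_zero _).1 (hOdd h)⟩
  obtain ⟨s, hs⟩ := hEven h
  rw [← map_smul] at hs
  exact ⟨_, neg_one_pow_eq_or ℂ s, (Submodule.Quotient.eq _).1 hs⟩

/-- Let `γ` be a composition of `n` with blocks `B_j`, and let
`I ⊆ {1, …, n}` with `|I|` even, `I_j = I ∩ B_j`.  If every `|I_j|` is even then
`w_γ c_I ≡ ± w_γ` modulo commutators; otherwise `w_γ c_I` is a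
commutator-combination. -/
theorem wGamma_clifford_reduction (n : ℕ) (hn : 2 ≤ n) (u : ℂ)
    (γ : List ℕ) (hpos : ∀ g ∈ γ, 0 < g) (hsum : γ.sum = n)
    (I : Finset (Fin n)) (hI : Even I.card) :
    ((∀ k < γ.length,
        Even ((I.filter fun i : Fin n =>
          (γ.take k).sum ≤ (i : ℕ) ∧ (i : ℕ) < (γ.take (k + 1)).sum).card)) →
      ∃ ε : ℂ, (ε = 1 ∨ ε = -1) ∧
        wH n u (wGamma n γ) * cProd n u I - ε • wH n u (wGamma n γ) ∈
          commSpan (HA n u)) ∧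
    ((¬ ∀ k < γ.length,
        Even ((I.filter fun i : Fin n =>
          (γ.take k).sum ≤ (i : ℕ) ∧ (i : ℕ) < (γ.take (k + 1)).sum).card)) →
      wH n u (wGamma n γ) * cProd n u I ∈ commSpan (HA n u)) :=
  wGamma_clifford_reduction_general n u γ hsum I hI

end DAHCA
end
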